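/- arXiv:2603.23275 — 5 statements merged into one kernel-verified Lean document; each statement's English description precedes it below -/
import Mathlib

section
/- Let T > 0, let f : ℝ → ℝ be twice continuously differentiable on [0,T] with f(t) > 0 for all t ∈ [0,T], let m, λ ∈ ℝ, and let u, v : ℝ → ℂ be functions, with u twice differentiable on [0,T] and v differentiable on [0,T], solving the coupled radial Dirac system on [0,T]. Then u satisfies on [0,T] the decoupled second-order equation u''(t) + (f'(t)/f(t)) u'(t) + ( f''(t)/(2 f(t)) − f'(t)²/(4 f(t)²) + m f'(t)/f(t)² − m²/f(t)² + λ² ) u(t) = 0. -/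
open Complex Set

/-- **Decoupling of the radial Dirac system.**
If `(u, v)` solves the coupled radial Dirac system on `[0,T]` with warping
function `f` (twice continuously differentiable, positive on `[0,T]`) and
parameters `m, λ`, then `u` satisfies the decoupled second-order equation
`u'' + (f'/f) u' + (f''/(2f) − f'²/(4f²) + m f'/f² − m²/f² + λ²) u = 0` on `[0,T]`. -/
theorem decoupled_second_order_equation
    (T : ℝ) (hT : 0 < T)
    (f f' f'' : ℝ → ℝ)
    (hf : ∀ t ∈ Icc (0:ℝ) T, HasDerivAt f (f' t) t)
    (hf' : ∀ t ∈ Icc (0:ℝ) T, HasDerivAt f' (f'' t) t)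
    (hf''c : ContinuousOn f'' (Icc (0:ℝ) T))
    (hfpos : ∀ t ∈ Icc (0:ℝ) T, 0 < f t)
    (m lam : ℝ)
    (u u' u'' v v' : ℝ → ℂ)
    (hu : ∀ t ∈ Icc (0:ℝ) T, HasDerivAt u (u' t) t)
    (hu' : ∀ t ∈ Icc (0:ℝ) T, HasDerivAt u' (u'' t) t)
    (hv : ∀ t ∈ Icc (0:ℝ) T, HasDerivAt v (v' t) t)
    (heqv : ∀ t ∈ Icc (0:ℝ) T,
      v' t + ((f' t : ℂ) / (2 * (f t : ℂ))) * v t + ((m : ℂ) / (f t : ℂ)) * v t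
        = -Complex.I * (lam : ℂ) * u t)
    (hequ : ∀ t ∈ Icc (0:ℝ) T,
      u' t + ((f' t : ℂ) / (2 * (f t : ℂ))) * u t - ((m : ℂ) / (f t : ℂ)) * u t
        = -Complex.I * (lam : ℂ) * v t) :
    ∀ t ∈ Icc (0:ℝ) T,
      u'' t + ((f' t : ℂ) / (f t : ℂ)) * u' t
        + ( (f'' t : ℂ) / (2 * (f t : ℂ))
            - (f' t : ℂ)^2 / (4 * (f t : ℂ)^2)
            + (m : ℂ) * (f' t : ℂ) / (f t : ℂ)^2
            - (m : ℂ)^2 / (f t : ℂ)^2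
            + (lam : ℂ)^2 ) * u t = 0 := by

  intro t ht
  have hF0 : (f t : ℂ) ≠ 0 := by
    exact_mod_cast (hfpos t ht).ne'
  have hden : (2 * (f t : ℂ)) ≠ 0 := by
    simp [hF0]
  -- derivatives of the complexified coefficient functions
  have hdf : HasDerivAt (fun s => (f s : ℂ)) (f' t) t := (hf t ht).ofReal_comp
  have hdf' : HasDerivAt (fun s => (f' s : ℂ)) (f'' t) t := (hf' t ht).ofReal_comp
  have hd2f : HasDerivAt (fun s => (2 : ℂ) * (f s : ℂ)) (2 * f' t) t := by
    simpa [mul_comm] using hdf.const_mul (2 : ℂ)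
  have hq1 : HasDerivAt (fun s => (f' s : ℂ) / (2 * (f s : ℂ)))
      (((f'' t : ℂ) * (2 * (f t : ℂ)) - (f' t : ℂ) * (2 * (f' t : ℂ))) / (2 * (f t : ℂ))^2) t :=
    hdf'.div hd2f hden
  have hq2 : HasDerivAt (fun s => (m : ℂ) / (f s : ℂ))
      ((0 * (f t : ℂ) - (m : ℂ) * (f' t : ℂ)) / (f t : ℂ)^2) t :=
    (hasDerivAt_const t (m : ℂ)).div hdf hF0
  -- derivative of the left-hand side of `hequ`
  have hq1' : HasDerivAt (fun s => (f' s : ℂ) / (2 * (f s : ℂ)))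
      ((f'' t : ℂ) / (2 * (f t : ℂ)) - (f' t : ℂ)^2 / (2 * (f t : ℂ)^2)) t := by
    convert hq1 using 1
    field_simp
  have hg : HasDerivAt
      (fun s => u' s + ((f' s : ℂ) / (2 * (f s : ℂ))) * u s - ((m : ℂ) / (f s : ℂ)) * u s)
      (u'' t + (((f'' t : ℂ) / (2 * (f t : ℂ)) - (f' t : ℂ)^2 / (2 * (f t : ℂ)^2)) * u t
          + ((f' t : ℂ) / (2 * (f t : ℂ))) * u' t)
        - ((-((m : ℂ) * (f' t : ℂ)) / (f t : ℂ)^2) * u t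
          + ((m : ℂ) / (f t : ℂ)) * u' t)) t := by
    have hq2' : HasDerivAt (fun s => (m : ℂ) / (f s : ℂ))
        (-((m : ℂ) * (f' t : ℂ)) / (f t : ℂ)^2) t := by
      convert hq2 using 1
      ring
    exact ((hu' t ht).add (hq1'.mul (hu t ht))).sub (hq2'.mul (hu t ht))
  have hh : HasDerivAt (fun s => -Complex.I * (lam : ℂ) * v s)
      (-Complex.I * (lam : ℂ) * v' t) t := (hv t ht).const_mul _
  have hgw := hg.hasDerivWithinAt (s := Icc (0:ℝ) T)
  have hgw2 : HasDerivWithinAt (fun s => -Complex.I * (lam : ℂ) * v s)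
      (u'' t + (((f'' t : ℂ) / (2 * (f t : ℂ)) - (f' t : ℂ)^2 / (2 * (f t : ℂ)^2)) * u t
          + ((f' t : ℂ) / (2 * (f t : ℂ))) * u' t)
        - ((-((m : ℂ) * (f' t : ℂ)) / (f t : ℂ)^2) * u t
          + ((m : ℂ) / (f t : ℂ)) * u' t)) (Icc (0:ℝ) T) t :=
    hgw.congr (fun y hy => (hequ y hy).symm) (hequ t ht).symm
  have key :
      u'' t + (((f'' t : ℂ) / (2 * (f t : ℂ)) - (f' t : ℂ)^2 / (2 * (f t : ℂ)^2)) * u t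
          + ((f' t : ℂ) / (2 * (f t : ℂ))) * u' t)
        - ((-((m : ℂ) * (f' t : ℂ)) / (f t : ℂ)^2) * u t
          + ((m : ℂ) / (f t : ℂ)) * u' t)
      = -Complex.I * (lam : ℂ) * v' t :=
    ((uniqueDiffOn_Icc hT) t ht).eq_deriv _ hgw2 (hh.hasDerivWithinAt (s := Icc (0:ℝ) T))
  have h2 := heqv t ht
  have h3 := hequ t ht
  linear_combination key + (-Complex.I * (lam : ℂ)) * h2
    + ((f' t : ℂ) / (2 * (f t : ℂ)) + (m : ℂ) / (f t : ℂ)) * h3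
    + (lam : ℂ)^2 * u t * Complex.I_sq
end

section
/- Let T > 0, let f : ℝ → ℝ be continuously differentiable on [0,T] with f(t) > 0 for all t ∈ [0,T], let m ∈ ℝ and λ ∈ ℝ with λ ≠ 0. Suppose u : ℝ → ℂ is twice differentiable on [0,T] and satisfies on [0,T] the decoupled second-order equation u''(t) + (f'(t)/f(t)) u'(t) + ( f''(t)/(2 f(t)) − f'(t)²/(4 f(t)²) + m f'(t)/f(t)² − m²/f(t)² + λ² ) u(t) = 0 (assuming f is twice differentiable on [0,T]). Define v : ℝ → ℂ by v(t) = (i/λ) ( u'(t) + ( f'(t)/(2 f(t)) − m/f(t) ) u(t) ). Then the pair (u, v) solves the coupled radial Dirac system on [0,T]. -/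
/-!
Writing `p = f'/(2f) − m/f` and `q = f'/(2f) + m/f`, the second-order operator factors as
`(∂ + q)(∂ + p) = ∂² + (f'/f) ∂ + (p' + q p)`, and `p' + q p` is the zeroth-order coefficient
of the decoupled equation without its `λ²` term. Hence `v = (i/λ)(∂ + p) u` satisfies
`(∂ + q) v = (i/λ)(−λ² u) = −iλ u`, while `(∂ + p) u = −iλ v` holds by the definition of `v`.
-/

open Complex Set

theorem HasDerivAt.const_mul_add_mul {p u u' : ℝ → ℂ} {p' u'' : ℂ} {t : ℝ} (c : ℂ)
    (hp : HasDerivAt p p' t) (hu : HasDerivAt u (u' t) t) (hu' : HasDerivAt u' u'' t) :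
    HasDerivAt (fun s => c * (u' s + p s * u s)) (c * (u'' + p' * u t + p t * u' t)) t :=
  ((hu'.add (hp.mul hu)).const_mul c).congr_deriv (by ring)

theorem hasDerivAt_radialPotential {f f' : ℝ → ℝ} {f'' t : ℝ} (m : ℝ)
    (hf : HasDerivAt f (f' t) t) (hf' : HasDerivAt f' f'' t) (hft : f t ≠ 0) :
    HasDerivAt (fun s => (f' s : ℂ) / (2 * (f s : ℂ)) - (m : ℂ) / (f s : ℂ))
      ((f'' : ℂ) / (2 * (f t : ℂ)) - (f' t : ℂ) ^ 2 / (2 * (f t : ℂ) ^ 2)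
        + (m : ℂ) * (f' t : ℂ) / (f t : ℂ) ^ 2) t := by
  have hftC : (f t : ℂ) ≠ 0 := by exact_mod_cast hft
  have hA := hf'.ofReal_comp.div (hf.ofReal_comp.const_mul 2) (mul_ne_zero two_ne_zero hftC)
  have hB := (hasDerivAt_const t (m : ℂ)).div hf.ofReal_comp hftC
  exact (hA.sub hB).congr_deriv (by field_simp; ring)

theorem neg_I_mul_mul_I_div {z : ℂ} (hz : z ≠ 0) : -I * z * (I / z) = 1 := by
  field_simp
  simp

theorem reconstruction_solves_coupled_system_general
    (T : ℝ)
    (f f' f'' : ℝ → ℝ)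
    (hf : ∀ t ∈ Icc (0:ℝ) T, HasDerivAt f (f' t) t)
    (hf' : ∀ t ∈ Icc (0:ℝ) T, HasDerivAt f' (f'' t) t)
    (hfpos : ∀ t ∈ Icc (0:ℝ) T, 0 < f t)
    (m lam : ℝ) (hlam : lam ≠ 0)
    (u u' u'' : ℝ → ℂ)
    (hu : ∀ t ∈ Icc (0:ℝ) T, HasDerivAt u (u' t) t)
    (hu' : ∀ t ∈ Icc (0:ℝ) T, HasDerivAt u' (u'' t) t)
    (hode : ∀ t ∈ Icc (0:ℝ) T,
      u'' t + ((f' t : ℂ) / (f t : ℂ)) * u' t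
        + ( (f'' t : ℂ) / (2 * (f t : ℂ))
            - (f' t : ℂ)^2 / (4 * (f t : ℂ)^2)
            + (m : ℂ) * (f' t : ℂ) / (f t : ℂ)^2
            - (m : ℂ)^2 / (f t : ℂ)^2
            + (lam : ℂ)^2 ) * u t = 0)
    (v : ℝ → ℂ)
    (hvdef : ∀ t, v t = (Complex.I / (lam : ℂ)) *
      (u' t + ((f' t : ℂ) / (2 * (f t : ℂ)) - (m : ℂ) / (f t : ℂ)) * u t)) :
    ∃ v' : ℝ → ℂ,
      (∀ t ∈ Icc (0:ℝ) T, HasDerivAt v (v' t) t) ∧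
      (∀ t ∈ Icc (0:ℝ) T,
        v' t + ((f' t : ℂ) / (2 * (f t : ℂ))) * v t + ((m : ℂ) / (f t : ℂ)) * v t
          = -Complex.I * (lam : ℂ) * u t) ∧
      (∀ t ∈ Icc (0:ℝ) T,
        u' t + ((f' t : ℂ) / (2 * (f t : ℂ))) * u t - ((m : ℂ) / (f t : ℂ)) * u t
          = -Complex.I * (lam : ℂ) * v t) := by
  have hlamC : (lam : ℂ) ≠ 0 := by exact_mod_cast hlam
  refine ⟨fun t => I / lam * (u'' t
      + ((f'' t : ℂ) / (2 * (f t : ℂ)) - (f' t : ℂ) ^ 2 / (2 * (f t : ℂ) ^ 2)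
        + (m : ℂ) * (f' t : ℂ) / (f t : ℂ) ^ 2) * u t
      + ((f' t : ℂ) / (2 * (f t : ℂ)) - (m : ℂ) / (f t : ℂ)) * u' t),
    fun t ht => ?_, fun t ht => ?_, fun t ht => ?_⟩
  · rw [funext hvdef]
    exact (hasDerivAt_radialPotential m (hf t ht) (hf' t ht) (hfpos t ht).ne').const_mul_add_mul
      _ (hu t ht) (hu' t ht)
  · rw [hvdef]
    linear_combination (I / lam) * hode t ht - (I * lam * u t) * mul_inv_cancel₀ hlamC
  · rw [hvdef, ← mul_assoc, neg_I_mul_mul_I_div hlamC]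
    ring

/-- **Reconstruction of the second spinor component.**
If `u` satisfies the decoupled second-order equation on `[0,T]` with `λ ≠ 0`,
and `v` is defined by `v = (i/λ)(u' + (f'/(2f) − m/f) u)`, then the pair
`(u, v)` solves the coupled radial Dirac system on `[0,T]`. -/
theorem reconstruction_solves_coupled_system
    (T : ℝ) (hT : 0 < T)
    (f f' f'' : ℝ → ℝ)
    (hf : ∀ t ∈ Icc (0:ℝ) T, HasDerivAt f (f' t) t)
    (hf' : ∀ t ∈ Icc (0:ℝ) T, HasDerivAt f' (f'' t) t)
    (hf'c : ContinuousOn f' (Icc (0:ℝ) T))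
    (hfpos : ∀ t ∈ Icc (0:ℝ) T, 0 < f t)
    (m lam : ℝ) (hlam : lam ≠ 0)
    (u u' u'' : ℝ → ℂ)
    (hu : ∀ t ∈ Icc (0:ℝ) T, HasDerivAt u (u' t) t)
    (hu' : ∀ t ∈ Icc (0:ℝ) T, HasDerivAt u' (u'' t) t)
    (hode : ∀ t ∈ Icc (0:ℝ) T,
      u'' t + ((f' t : ℂ) / (f t : ℂ)) * u' t
        + ( (f'' t : ℂ) / (2 * (f t : ℂ))
            - (f' t : ℂ)^2 / (4 * (f t : ℂ)^2)
            + (m : ℂ) * (f' t : ℂ) / (f t : ℂ)^2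
            - (m : ℂ)^2 / (f t : ℂ)^2
            + (lam : ℂ)^2 ) * u t = 0)
    (v : ℝ → ℂ)
    (hvdef : ∀ t, v t = (Complex.I / (lam : ℂ)) *
      (u' t + ((f' t : ℂ) / (2 * (f t : ℂ)) - (m : ℂ) / (f t : ℂ)) * u t)) :
    ∃ v' : ℝ → ℂ,
      (∀ t ∈ Icc (0:ℝ) T, HasDerivAt v (v' t) t) ∧
      (∀ t ∈ Icc (0:ℝ) T,
        v' t + ((f' t : ℂ) / (2 * (f t : ℂ))) * v t + ((m : ℂ) / (f t : ℂ)) * v t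
          = -Complex.I * (lam : ℂ) * u t) ∧
      (∀ t ∈ Icc (0:ℝ) T,
        u' t + ((f' t : ℂ) / (2 * (f t : ℂ))) * u t - ((m : ℂ) / (f t : ℂ)) * u t
          = -Complex.I * (lam : ℂ) * v t) :=
  reconstruction_solves_coupled_system_general T f f' f'' hf hf' hfpos m lam hlam u u' u'' hu hu'
    hode v hvdef
end

section
/- Let T > 0, let f : ℝ → ℝ be continuously differentiable on [0,T] with f(t) > 0 for all t ∈ [0,T], and let m ∈ ℝ. Let u, v, p, q : ℝ → ℂ be continuously differentiable on [0,T], and define D(u,v) = ( i·(v' + (f'/(2f)) v + (m/f) v), i·(u' + (f'/(2f)) u − (m/f) u) ). Suppose the pairs (u,v) and (p,q) satisfy the APS boundary conditions, i.e. either u(0) = 0, v(T) = 0, p(0) = 0, q(T) = 0 (the case m > 0), or v(0) = 0, u(T) = 0, q(0) = 0, p(T) = 0 (the case m < 0). Then ∫₀ᵀ [ (D(u,v))₁ conj(p) + (D(u,v))₂ conj(q) ] f dt = ∫₀ᵀ [ u conj((D(p,q))₁) + v conj((D(p,q))₂) ] f dt; that is, the modewise Dirac operator with APS boundary conditions is symmetric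 in the weighted L² inner product. -/
/-!
Integration by parts. Pointwise, the difference of the two integrands is the derivative of the
boundary form `B = i f (v p̄ + u q̄)`: the `± m/f` terms cancel between the two sides, and the
two `f'/(2f)` terms add up to `f'/f`, which together with the weight `f` is exactly what the
product rule needs for `(f (v p̄ + u q̄))'`. Hence the difference of the integrals is
`B(T) - B(0)`, and each APS condition kills one factor of each product at each endpoint.
-/

open Complex Set intervalIntegral
open scoped ComplexConjugate

theorem integral_eq_integral_of_hasDerivAt_sub {E : Type*} [NormedAddCommGroup E]
    [NormedSpace ℝ E] [CompleteSpace E] {F G g : ℝ → E} {a b : ℝ}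
    (hg : ∀ t ∈ uIcc a b, HasDerivAt g (F t - G t) t)
    (hF : IntervalIntegrable F MeasureTheory.volume a b)
    (hG : IntervalIntegrable G MeasureTheory.volume a b) (hab : g a = g b) :
    ∫ t in a..b, F t = ∫ t in a..b, G t := by
  rw [← sub_eq_zero, ← integral_sub hF hG, integral_eq_sub_of_hasDerivAt hg (hF.sub hG), hab,
    sub_self]

theorem HasDerivAt.mul_conj {u p : ℝ → ℂ} {u' p' : ℂ} {t : ℝ} (hu : HasDerivAt u u' t)
    (hp : HasDerivAt p p' t) :
    HasDerivAt (fun s => u s * conj (p s)) (u' * conj (p t) + u t * conj p') t :=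
  hu.mul hp.star

theorem dirac_lagrange_identity {F F' m : ℝ} (hF : F ≠ 0) (u u' v v' p p' q q' : ℂ) :
    (I * (v' + F' / (2 * F) * v + m / F * v) * conj p
        + I * (u' + F' / (2 * F) * u - m / F * u) * conj q) * F
      - (u * conj (I * (q' + F' / (2 * F) * q + m / F * q))
        + v * conj (I * (p' + F' / (2 * F) * p - m / F * p))) * F
      = I * F' * (v * conj p + u * conj q)
        + I * F * ((v' * conj p + v * conj p') + (u' * conj q + u * conj q')) := by
  have hF' : (F : ℂ) ≠ 0 := ofReal_ne_zero.mpr hF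
  simp only [map_mul, map_add, map_sub, map_div₀, conj_ofReal, conj_I, map_ofNat]
  field_simp
  ring

/-- **Symmetry of the modewise Dirac operator under APS boundary conditions.**
If both pairs `(u,v)` and `(p,q)` satisfy the APS boundary conditions
(`u(0)=0, v(T)=0, p(0)=0, q(T)=0` in the case `m > 0`, or
`v(0)=0, u(T)=0, q(0)=0, p(T)=0` in the case `m < 0`), then
`⟨D(u,v),(p,q)⟩_{f dt} = ⟨(u,v),D(p,q)⟩_{f dt}`. -/
theorem aps_symmetric_weighted
    (T : ℝ) (hT : 0 < T)
    (f f' : ℝ → ℝ)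
    (hf : ∀ t ∈ Icc (0:ℝ) T, HasDerivAt f (f' t) t)
    (hf'c : ContinuousOn f' (Icc (0:ℝ) T))
    (hfpos : ∀ t ∈ Icc (0:ℝ) T, 0 < f t)
    (m : ℝ)
    (u u' v v' p p' q q' : ℝ → ℂ)
    (hu : ∀ t ∈ Icc (0:ℝ) T, HasDerivAt u (u' t) t)
    (hv : ∀ t ∈ Icc (0:ℝ) T, HasDerivAt v (v' t) t)
    (hp : ∀ t ∈ Icc (0:ℝ) T, HasDerivAt p (p' t) t)
    (hq : ∀ t ∈ Icc (0:ℝ) T, HasDerivAt q (q' t) t)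
    (hu'c : ContinuousOn u' (Icc (0:ℝ) T))
    (hv'c : ContinuousOn v' (Icc (0:ℝ) T))
    (hp'c : ContinuousOn p' (Icc (0:ℝ) T))
    (hq'c : ContinuousOn q' (Icc (0:ℝ) T))
    -- components of D(u,v) and D(p,q):
    (Duv₁ Duv₂ Dpq₁ Dpq₂ : ℝ → ℂ)
    (hDuv₁ : ∀ t, Duv₁ t = Complex.I *
      (v' t + ((f' t : ℂ) / (2 * (f t : ℂ))) * v t + ((m : ℂ) / (f t : ℂ)) * v t))
    (hDuv₂ : ∀ t, Duv₂ t = Complex.I *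
      (u' t + ((f' t : ℂ) / (2 * (f t : ℂ))) * u t - ((m : ℂ) / (f t : ℂ)) * u t))
    (hDpq₁ : ∀ t, Dpq₁ t = Complex.I *
      (q' t + ((f' t : ℂ) / (2 * (f t : ℂ))) * q t + ((m : ℂ) / (f t : ℂ)) * q t))
    (hDpq₂ : ∀ t, Dpq₂ t = Complex.I *
      (p' t + ((f' t : ℂ) / (2 * (f t : ℂ))) * p t - ((m : ℂ) / (f t : ℂ)) * p t))
    -- APS boundary conditions (case m > 0, or case m < 0):
    (hAPS : (u 0 = 0 ∧ v T = 0 ∧ p 0 = 0 ∧ q T = 0)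
          ∨ (v 0 = 0 ∧ u T = 0 ∧ q 0 = 0 ∧ p T = 0)) :
    (∫ t in (0:ℝ)..T,
        (Duv₁ t * (starRingEnd ℂ) (p t) + Duv₂ t * (starRingEnd ℂ) (q t)) * (f t : ℂ))
    = (∫ t in (0:ℝ)..T,
        (u t * (starRingEnd ℂ) (Dpq₁ t) + v t * (starRingEnd ℂ) (Dpq₂ t)) * (f t : ℂ)) := by
  have hIcc : uIcc (0:ℝ) T = Icc 0 T := uIcc_of_le hT.le
  have hf0 : ∀ t ∈ Icc (0:ℝ) T, f t ≠ 0 := fun t ht => (hfpos t ht).ne'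
  have hfc := HasDerivAt.continuousOn hf
  have huc := HasDerivAt.continuousOn hu
  have hvc := HasDerivAt.continuousOn hv
  have hpc := HasDerivAt.continuousOn hp
  have hqc := HasDerivAt.continuousOn hq
  simp only [hDuv₁, hDuv₂, hDpq₁, hDpq₂]
  refine integral_eq_integral_of_hasDerivAt_sub
    (g := fun t => I * f t * (v t * conj (p t) + u t * conj (q t))) ?deriv ?_ ?_ ?boundary
  case deriv =>
    intro t ht
    rw [hIcc] at ht
    rw [dirac_lagrange_identity (hf0 t ht)]
    exact ((hf t ht).ofReal_comp.const_mul I).mul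
      (((hv t ht).mul_conj (hp t ht)).add ((hu t ht).mul_conj (hq t ht)))
  case boundary =>
    rcases hAPS with ⟨hu0, hvT, hp0, hqT⟩ | ⟨hv0, huT, hq0, hpT⟩ <;> simp [*]
  all_goals
    exact ContinuousOn.intervalIntegrable (by rw [hIcc]; fun_prop (disch := simpa using hf0))
end

section
/- Let L > 0, δ > 0, and m ∈ ℝ. Then (1 − tanh(m/δ))² e^{mL} − (1 + tanh(m/δ))² e^{−mL} = 0 if and only if m·(L − 2/δ) = 0. In particular, if δ ≠ 2/L, then (1 − tanh(m/δ))² e^{mL} = (1 + tanh(m/δ))² e^{−mL} holds if and only if m = 0. -/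
/-! Writing `1 ∓ tanh z = e^{∓z} / cosh z` turns the matching equation into
`e^{a - 2z} = e^{2z - a}` (with `a = mL`, `z = m/δ`), i.e. `a = 2z` by injectivity of `exp`,
and `mL = 2m/δ` is `m (L - 2/δ) = 0`. -/

open Real

lemma Real.one_add_tanh (z : ℝ) : 1 + tanh z = exp z / cosh z := by
  rw [tanh_eq_sinh_div_cosh, ← cosh_add_sinh]
  field_simp [(cosh_pos z).ne']

lemma Real.one_sub_tanh (z : ℝ) : 1 - tanh z = exp (-z) / cosh z := by
  rw [tanh_eq_sinh_div_cosh, ← cosh_sub_sinh]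
  field_simp [(cosh_pos z).ne']

lemma Real.one_sub_tanh_sq_mul_exp (z a : ℝ) :
    (1 - tanh z) ^ 2 * exp a = exp (a - 2 * z) / cosh z ^ 2 := by
  rw [one_sub_tanh, div_pow, ← exp_nat_mul, div_mul_eq_mul_div, ← exp_add]
  ring_nf

lemma Real.one_add_tanh_sq_mul_exp_neg (z a : ℝ) :
    (1 + tanh z) ^ 2 * exp (-a) = exp (-(a - 2 * z)) / cosh z ^ 2 := by
  rw [one_add_tanh, div_pow, ← exp_nat_mul, div_mul_eq_mul_div, ← exp_add]
  ring_nf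

lemma Real.one_sub_tanh_sq_mul_exp_eq_iff (z a : ℝ) :
    (1 - tanh z) ^ 2 * exp a = (1 + tanh z) ^ 2 * exp (-a) ↔ a = 2 * z := by
  rw [one_sub_tanh_sq_mul_exp, one_add_tanh_sq_mul_exp_neg,
    div_left_inj' (pow_ne_zero 2 (cosh_pos z).ne'), exp_eq_exp]
  constructor <;> intro h <;> linarith

theorem regularized_matching_criterion_general
    (L δ m : ℝ) :
    ((1 - Real.tanh (m / δ))^2 * Real.exp (m * L)
      - (1 + Real.tanh (m / δ))^2 * Real.exp (-(m * L)) = 0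
      ↔ m * (L - 2 / δ) = 0) ∧
    (δ ≠ 2 / L →
      ((1 - Real.tanh (m / δ))^2 * Real.exp (m * L)
          = (1 + Real.tanh (m / δ))^2 * Real.exp (-(m * L))
        ↔ m = 0)) := by
  have matching_iff : (1 - tanh (m / δ)) ^ 2 * exp (m * L)
      = (1 + tanh (m / δ)) ^ 2 * exp (-(m * L)) ↔ m * (L - 2 / δ) = 0 := by
    rw [one_sub_tanh_sq_mul_exp_eq_iff, show m * (L - 2 / δ) = m * L - 2 * (m / δ) by ring,
      sub_eq_zero]
  refine ⟨sub_eq_zero.trans matching_iff, fun hδL => ?_⟩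
  have hL : L - 2 / δ ≠ 0 := fun h => hδL <| by
    rw [sub_eq_zero.1 h, div_div_cancel₀ two_ne_zero]
  rw [matching_iff, mul_eq_zero, or_iff_left hL]

/-- **Zero-mode matching identity for the regularized APS-type boundary
condition.** For `L > 0`, `δ > 0`, `m ∈ ℝ`:
`(1 − tanh(m/δ))² e^{mL} − (1 + tanh(m/δ))² e^{−mL} = 0 ↔ m(L − 2/δ) = 0`;
in particular, if `δ ≠ 2/L` then the matching equation holds iff `m = 0`. -/
theorem regularized_matching_criterion
    (L δ m : ℝ) (hL : 0 < L) (hδ : 0 < δ) :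
    ((1 - Real.tanh (m / δ))^2 * Real.exp (m * L)
      - (1 + Real.tanh (m / δ))^2 * Real.exp (-(m * L)) = 0
      ↔ m * (L - 2 / δ) = 0) ∧
    (δ ≠ 2 / L →
      ((1 - Real.tanh (m / δ))^2 * Real.exp (m * L)
          = (1 + Real.tanh (m / δ))^2 * Real.exp (-(m * L))
        ↔ m = 0)) :=
  regularized_matching_criterion_general L δ m
end

section
/- Let T > 0, let f : ℝ → ℝ be continuous on [0,T] with f(t) > 0 for all t ∈ [0,T], let m ∈ ℝ, δ > 0, set L = ∫₀ᵀ dτ/f(τ) and α = tanh(m/δ), and assume δ ≠ 2/L. Then the following are equivalent: (i) there exist differentiable functions u, w : ℝ → ℝ on [0,T], not both identically zero on [0,T], satisfying u'(t) = (m/f(t)) u(t) and w'(t) = −(m/f(t)) w(t) on [0,T] together with the regularized endpoint conditions (1 + α)u(0) + (1 − α)w(0) = 0 and (1 − α)u(T) + (1 + α)w(T) = 0; (ii) m = 0. That is, zero modes of the regularized APS-type family occur exactly at the boundary zeros m = k + A(s) = 0. -/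
/-!
For `m ≠ 0` the zero-mode equations integrate to `u = u(0) e^{mℓ}` and `w = w(0) e^{-mℓ}` with
`ℓ(t) = ∫₀ᵗ dτ/f`, so the endpoint conditions form a `2 × 2` linear system in `(u(0), w(0))`.
Writing `1 ± tanh x = e^{±x} / cosh x` with `x = m/δ`, its determinant vanishes exactly when
`e^{2x} = e^{mL}`, i.e. `2m/δ = mL`, i.e. `δ = 2/L`; this is excluded, so the solution is trivial.
For `m = 0` we have `α = 0`, and the constants `u = 1`, `w = -1` are a zero mode.
-/

open Set intervalIntegral Real

theorem eq_mul_exp_integral_of_hasDerivAt_of_continuous {a b t : ℝ} {p v : ℝ → ℝ}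
    (hp : Continuous p) (hv : ∀ s ∈ Icc a b, HasDerivAt v (p s * v s) s) (ht : t ∈ Icc a b) :
    v t = v a * exp (∫ τ in a..t, p τ) := by
  have hderiv : ∀ s ∈ Icc a b,
      HasDerivAt (fun s => v s * exp (-∫ τ in a..s, p τ)) 0 s := by
    intro s hs
    exact ((hv s hs).mul (hp.integral_hasStrictDerivAt a s).hasDerivAt.neg.exp).congr_deriv
      (by ring)
  have hconst := constant_of_has_deriv_right_zero
    (fun s hs => (hderiv s hs).continuousAt.continuousWithinAt)
    (fun s hs => (hderiv s (Ico_subset_Icc_self hs)).hasDerivWithinAt) t ht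
  simp only [integral_same, neg_zero, exp_zero, mul_one] at hconst
  rw [← hconst, mul_assoc, ← exp_add, neg_add_cancel, exp_zero, mul_one]

theorem ContinuousOn.eq_mul_exp_integral_of_hasDerivAt {a b t : ℝ} {p v : ℝ → ℝ}
    (hp : ContinuousOn p (Icc a b)) (hv : ∀ s ∈ Icc a b, HasDerivAt v (p s * v s) s)
    (ht : t ∈ Icc a b) :
    v t = v a * exp (∫ τ in a..t, p τ) := by
  have hab : a ≤ b := ht.1.trans ht.2
  have hP : ∀ s ∈ Icc a b, IccExtend hab ((Icc a b).domRestrict p) s = p s :=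
    fun s hs => IccExtend_of_mem _ _ hs
  refine (eq_mul_exp_integral_of_hasDerivAt_of_continuous
    ((continuousOn_iff_continuous_domRestrict.mp hp).Icc_extend' (h := hab))
    (fun s hs => hP s hs ▸ hv s hs) ht).trans ?_
  congr 2
  refine integral_congr fun s hs => hP s ?_
  rw [uIcc_of_le ht.1] at hs
  exact Icc_subset_Icc_right ht.2 hs

theorem cosh_mul_one_add_tanh (x : ℝ) : cosh x * (1 + tanh x) = exp x := by
  rw [tanh_eq_sinh_div_cosh, mul_add, mul_div_cancel₀ _ (cosh_pos x).ne', mul_one, cosh_add_sinh]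

theorem cosh_mul_one_sub_tanh (x : ℝ) : cosh x * (1 - tanh x) = exp (-x) := by
  rw [tanh_eq_sinh_div_cosh, mul_sub, mul_div_cancel₀ _ (cosh_pos x).ne', mul_one, cosh_sub_sinh]

theorem eq_zero_of_tanh_boundary_conditions {x y u₀ w₀ : ℝ} (hxy : 2 * x ≠ y)
    (h₀ : (1 + tanh x) * u₀ + (1 - tanh x) * w₀ = 0)
    (h₁ : (1 - tanh x) * (u₀ * exp y) + (1 + tanh x) * (w₀ * exp (-y)) = 0) :
    u₀ = 0 ∧ w₀ = 0 := by
  have h₀' : exp x * u₀ + exp (-x) * w₀ = 0 := by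
    rw [← cosh_mul_one_add_tanh x, ← cosh_mul_one_sub_tanh x]; linear_combination cosh x * h₀
  have h₁' : exp (-x) * exp y * u₀ + exp x * exp (-y) * w₀ = 0 := by
    rw [← cosh_mul_one_add_tanh x, ← cosh_mul_one_sub_tanh x]; linear_combination cosh x * h₁
  have hdet : exp x * (exp x * exp (-y)) - exp (-x) * (exp (-x) * exp y) ≠ 0 := by
    simp only [← exp_add, sub_ne_zero]
    exact exp_injective.ne (by contrapose! hxy; linarith)
  have hu : u₀ = 0 := by
    refine (mul_eq_zero.mp ?_).resolve_right hdet
    linear_combination exp x * exp (-y) * h₀' - exp (-x) * h₁'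
  refine ⟨hu, ?_⟩
  rw [hu, mul_zero, zero_add] at h₀'
  exact (mul_eq_zero.mp h₀').resolve_left (exp_pos _).ne'

theorem regularized_zero_mode_criterion_general
    (T : ℝ) (hT : 0 < T)
    (f : ℝ → ℝ)
    (hfc : ContinuousOn f (Icc (0:ℝ) T))
    (hfpos : ∀ t ∈ Icc (0:ℝ) T, 0 < f t)
    (m δ : ℝ)
    (L : ℝ) (hL : L = ∫ τ in (0:ℝ)..T, 1 / f τ)
    (α : ℝ) (hα : α = Real.tanh (m / δ))
    (hnd : δ ≠ 2 / L) :
    (∃ u w : ℝ → ℝ,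
        (∀ t ∈ Icc (0:ℝ) T, HasDerivAt u ((m / f t) * u t) t) ∧
        (∀ t ∈ Icc (0:ℝ) T, HasDerivAt w (-(m / f t) * w t) t) ∧
        ¬ (∀ t ∈ Icc (0:ℝ) T, u t = 0 ∧ w t = 0) ∧
        (1 + α) * u 0 + (1 - α) * w 0 = 0 ∧
        (1 - α) * u T + (1 + α) * w T = 0)
    ↔ m = 0 := by
  constructor
  · rintro ⟨u, w, hu, hw, hnt, hb₀, hbT⟩
    by_contra hm
    have hq : ContinuousOn (fun t => m / f t) (Icc 0 T) :=
      continuousOn_const.div hfc fun t ht => (hfpos t ht).ne'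
    have huf := fun t => hq.eq_mul_exp_integral_of_hasDerivAt hu (t := t)
    have hwf := fun t =>
      hq.neg.eq_mul_exp_integral_of_hasDerivAt (p := fun t => -(m / f t)) hw (t := t)
    have hint : ∫ τ in (0:ℝ)..T, m / f τ = m * L := by
      simp_rw [hL, ← integral_const_mul, mul_one_div]
    have hT' : T ∈ Icc 0 T := right_mem_Icc.mpr hT.le
    rw [huf T hT', hwf T hT', integral_neg, hint] at hbT
    have hxy : 2 * (m / δ) ≠ m * L := by
      refine fun h => hnd ?_
      have hL' : 2 / δ = L := (mul_right_inj' hm).mp (by linear_combination h)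
      rw [← hL', div_div_eq_mul_div, mul_div_cancel_left₀ δ two_ne_zero]
    obtain ⟨hu₀, hw₀⟩ := eq_zero_of_tanh_boundary_conditions hxy (hα ▸ hb₀) (hα ▸ hbT)
    exact hnt fun t ht => ⟨by rw [huf t ht, hu₀, zero_mul], by rw [hwf t ht, hw₀, zero_mul]⟩
  · rintro rfl
    have hα₀ : α = 0 := by simp [hα]
    refine ⟨fun _ => 1, fun _ => -1, fun t _ => ?_, fun t _ => ?_, fun h => ?_, ?_, ?_⟩
    · simpa using hasDerivAt_const t (1 : ℝ)
    · simpa using hasDerivAt_const t (-1 : ℝ)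
    · simpa using (h 0 (left_mem_Icc.mpr hT.le)).1
    all_goals rw [hα₀]; ring

/-- **Zero modes of the regularized APS-type family occur exactly at the
boundary zeros.** With `L = ∫₀ᵀ dτ/f(τ)`, `α = tanh(m/δ)` and the
nondegeneracy assumption `δ ≠ 2/L`, there exists a nontrivial solution of
the zero-mode system `u' = (m/f)u`, `w' = −(m/f)w` on `[0,T]` satisfying
the regularized endpoint conditions
`(1+α)u(0) + (1−α)w(0) = 0` and `(1−α)u(T) + (1+α)w(T) = 0`
if and only if `m = 0`. -/
theorem regularized_zero_mode_criterion
    (T : ℝ) (hT : 0 < T)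
    (f : ℝ → ℝ)
    (hfc : ContinuousOn f (Icc (0:ℝ) T))
    (hfpos : ∀ t ∈ Icc (0:ℝ) T, 0 < f t)
    (m δ : ℝ) (hδ : 0 < δ)
    (L : ℝ) (hL : L = ∫ τ in (0:ℝ)..T, 1 / f τ)
    (α : ℝ) (hα : α = Real.tanh (m / δ))
    (hnd : δ ≠ 2 / L) :
    (∃ u w : ℝ → ℝ,
        (∀ t ∈ Icc (0:ℝ) T, HasDerivAt u ((m / f t) * u t) t) ∧
        (∀ t ∈ Icc (0:ℝ) T, HasDerivAt w (-(m / f t) * w t) t) ∧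
        ¬ (∀ t ∈ Icc (0:ℝ) T, u t = 0 ∧ w t = 0) ∧
        (1 + α) * u 0 + (1 - α) * w 0 = 0 ∧
        (1 - α) * u T + (1 + α) * w T = 0)
    ↔ m = 0 :=
  regularized_zero_mode_criterion_general T hT f hfc hfpos m δ L hL α hα hnd
end
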